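/- Let Q₂' : ℝ⁹ → ℝ⁹ and g₃, g₄ ∈ ℝ⁹ be as in the context. Then for every natural number c, the c-fold iterate of Q₂' applied to g₃ satisfies Q₂'^{∘c}(g₃) = (c+1)·g₃ + c·g₄. -/
import Mathlib


/-- The `max`-tropicalisation of the pullback action of `σ₂` of `Gr(4,8)` on the
ŷ-variables of the initial seed, realizing the action of `σ₂⁻¹` on g-vectors. -/
noncomputable def Q2' : (Fin 9 → ℝ) → (Fin 9 → ℝ) := fun v =>
  ![v 0 + max 0 (max (v 1) (max (v 3) (max (v 1 + v 3) (v 1 + v 3 + v 4)))),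
    v 1 + v 2 + max 0 (max (v 3) (v 3 + v 4))
      - max 0 (max (v 1) (max (v 3) (max (v 1 + v 3) (v 1 + v 3 + v 4)))),
    v 3 + v 4 + v 5 - max 0 (max (v 3) (v 3 + v 4)),
    v 3 + v 6 + max 0 (max (v 1) (v 1 + v 4))
      - max 0 (max (v 1) (max (v 3) (max (v 1 + v 3) (v 1 + v 3 + v 4)))),
    v 4 - max 0 (max (v 1) (v 1 + v 4)) - max 0 (max (v 3) (v 3 + v 4)),
    max 0 (max (v 1) (max (v 3) (max (v 1 + v 3) (v 1 + v 3 + v 4)))) - v 3 - v 4,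
    v 1 + v 4 + v 7 - max 0 (max (v 1) (v 1 + v 4)),
    max 0 (max (v 1) (max (v 3) (max (v 1 + v 3) (v 1 + v 3 + v 4)))) - v 1 - v 4,
    v 8 + max 0 (max (v 1) (v 1 + v 4)) + max 0 (max (v 3) (v 3 + v 4))
      - max 0 (max (v 1) (max (v 3) (max (v 1 + v 3) (v 1 + v 3 + v 4))))]

/-- The g-vector `g₃ = σ₂⁻¹(g₁)`. -/
noncomputable def g3 : Fin 9 → ℝ := ![1, 0, -1, 0, -2, 1, -1, 1, 1]

/-- The g-vector `g₄ = σ₁⁻¹(g₂)`. -/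
noncomputable def g4 : Fin 9 → ℝ := ![-1, -1, 1, -1, 2, 0, 1, 0, -1]

lemma vec_eq (c : ℝ) :
    (c + 1) • g3 + c • g4 = ![1, -c, -1, -c, -2, c + 1, -1, c + 1, 1] := by
  simp only [g3, g4, Matrix.smul_cons, Matrix.cons_add, smul_eq_mul, Matrix.smul_empty,
    Matrix.empty_add_empty, Matrix.head_cons, Matrix.vecTail, Function.comp,
    Matrix.cons_val_succ, Matrix.vecHead, Matrix.cons_val_zero]
  ring_nf

lemma Q2'_apply (c : ℝ) (hc : 0 ≤ c) :
    Q2' ![1, -c, -1, -c, -2, c + 1, -1, c + 1, 1]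
      = ![1, -(c + 1), -1, -(c + 1), -2, c + 1 + 1, -1, c + 1 + 1, 1] := by
  have hR : max 0 (max (-c) (max (-c) (max (-c + -c) (-c + -c + -2)))) = 0 :=
    max_eq_left (max_le (by linarith) (max_le (by linarith)
      (max_le (by linarith) (by linarith))))
  have hS : max 0 (max (-c) (-c + -2)) = 0 :=
    max_eq_left (max_le (by linarith) (by linarith))
  funext i
  fin_cases i
  · show (1:ℝ) + max 0 (max (-c) (max (-c) (max (-c + -c) (-c + -c + -2)))) = 1
    rw [hR]; ring
  · show -c + -1 + max 0 (max (-c) (-c + -2))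
      - max 0 (max (-c) (max (-c) (max (-c + -c) (-c + -c + -2)))) = -(c + 1)
    rw [hS, hR]; ring
  · show -c + -2 + (c + 1) - max 0 (max (-c) (-c + -2)) = -1
    rw [hS]; ring
  · show -c + -1 + max 0 (max (-c) (-c + -2))
      - max 0 (max (-c) (max (-c) (max (-c + -c) (-c + -c + -2)))) = -(c + 1)
    rw [hS, hR]; ring
  · show (-2:ℝ) - max 0 (max (-c) (-c + -2)) - max 0 (max (-c) (-c + -2)) = -2
    rw [hS]; ring
  · show max 0 (max (-c) (max (-c) (max (-c + -c) (-c + -c + -2)))) - -c - -2 = c + 1 + 1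
    rw [hR]; ring
  · show -c + -2 + (c + 1) - max 0 (max (-c) (-c + -2)) = -1
    rw [hS]; ring
  · show max 0 (max (-c) (max (-c) (max (-c + -c) (-c + -c + -2)))) - -c - -2 = c + 1 + 1
    rw [hR]; ring
  · show (1:ℝ) + max 0 (max (-c) (-c + -2)) + max 0 (max (-c) (-c + -2))
      - max 0 (max (-c) (max (-c) (max (-c + -c) (-c + -c + -2)))) = 1
    rw [hS, hR]; ring

/-- For every natural number `c`, the `c`-fold iterate of `Q₂'` applied to `g₃`
equals `(c+1)·g₃ + c·g₄`. -/
theorem stmt_12 (c : ℕ) :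
    Q2'^[c] g3 = ((c : ℝ) + 1) • g3 + (c : ℝ) • g4 := by
  induction c with
  | zero => simp
  | succ n ih =>
    rw [Function.iterate_succ_apply', ih, vec_eq, Q2'_apply _ (Nat.cast_nonneg n)]
    push_cast
    rw [vec_eq ((n : ℝ) + 1)]
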